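/- Let α₁, α₂ ∈ ℝ and ρ ∈ (−1, 1). Then ∫_{ℝ²} ((1 − α₁ z₁ − α₂ z₂)² + 1)² φ₂(z₁, z₂; ρ) dz₁ dz₂ = (2 + α₁² + 2ρα₁α₂ + α₂²)(2 + 3α₁² + 6ρα₁α₂ + 3α₂²). Consequently the bivariate Balakrishnan alpha skew normal density f(z₁, z₂; α₁, α₂, ρ) = ((1 − α₁z₁ − α₂z₂)² + 1)² φ₂(z₁, z₂; ρ) / ((2 + α₁² + 2ρα₁α₂ + α₂²)(2 + 3α₁² + 6ρα₁α₂ + 3α₂²)) is a probability density on ℝ². -/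

import Mathlib

open MeasureTheory

/-- The bivariate standard normal probability density function with correlation `ρ`. -/
noncomputable def phi2 (ρ z₁ z₂ : ℝ) : ℝ :=
  (2 * Real.pi * Real.sqrt (1 - ρ ^ 2))⁻¹ *
    Real.exp (-(z₁ ^ 2 - 2 * ρ * z₁ * z₂ + z₂ ^ 2) / (2 * (1 - ρ ^ 2)))

open Real Filter Topology

lemma pow_le_gauss_bound {c : ℝ} (hc : 0 < c) (n : ℕ) (x : ℝ) :
    |x| ^ n ≤ 1 + n.factorial * (2 / c) ^ n * Real.exp (c / 2 * x ^ 2) := by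
  rcases le_or_gt (|x|) 1 with h | h
  · have : |x| ^ n ≤ 1 := pow_le_one₀ (abs_nonneg x) h
    have : (0:ℝ) < n.factorial * (2 / c) ^ n * Real.exp (c / 2 * x ^ 2) := by positivity
    linarith
  · have hx2 : |x| ^ n ≤ (x ^ 2) ^ n := by
      apply pow_le_pow_left₀ (abs_nonneg x)
      nlinarith [sq_abs x, abs_nonneg x]
    have key : (c / 2 * x ^ 2) ^ n / n.factorial ≤ Real.exp (c / 2 * x ^ 2) :=
      Real.pow_div_factorial_le_exp (x := c / 2 * x ^ 2) (by positivity) n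
    have h2 : (x ^ 2) ^ n = (2 / c) ^ n * (c / 2 * x ^ 2) ^ n := by
      rw [← mul_pow]; congr 1; field_simp
    have hn : (0:ℝ) < n.factorial := by positivity
    have : (c / 2 * x ^ 2) ^ n ≤ n.factorial * Real.exp (c / 2 * x ^ 2) := by
      rw [div_le_iff₀ hn] at key; linarith [key]
    have h3 : (x ^ 2) ^ n ≤ (2 / c) ^ n * (n.factorial * Real.exp (c / 2 * x ^ 2)) := by
      rw [h2]; gcongr
    nlinarith [this, h3]

lemma integrable_pow_mul_gauss {c : ℝ} (hc : 0 < c) (n : ℕ) :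
    Integrable (fun x : ℝ => x ^ n * Real.exp (-c * x ^ 2)) := by
  have hint : Integrable (fun x : ℝ =>
      Real.exp (-c * x ^ 2) + n.factorial * (2 / c) ^ n * Real.exp (-(c / 2) * x ^ 2)) :=
    (integrable_exp_neg_mul_sq hc).add ((integrable_exp_neg_mul_sq (half_pos hc)).const_mul _)
  refine hint.mono' ?_ ?_
  · exact ((continuous_pow n).mul (by continuity)).aestronglyMeasurable
  · filter_upwards with x
    have hb := pow_le_gauss_bound hc n x
    have he : (0:ℝ) < Real.exp (-c * x ^ 2) := Real.exp_pos _
    rw [Real.norm_eq_abs, abs_mul, abs_pow, abs_of_pos he]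
    have : |x| ^ n * Real.exp (-c * x ^ 2) ≤
        (1 + n.factorial * (2 / c) ^ n * Real.exp (c / 2 * x ^ 2)) * Real.exp (-c * x ^ 2) := by
      gcongr
    calc |x| ^ n * Real.exp (-c * x ^ 2) ≤
        (1 + n.factorial * (2 / c) ^ n * Real.exp (c / 2 * x ^ 2)) * Real.exp (-c * x ^ 2) := this
      _ = Real.exp (-c * x ^ 2) + n.factorial * (2 / c) ^ n * Real.exp (-(c / 2) * x ^ 2) := by
          rw [add_mul, one_mul, mul_assoc, ← Real.exp_add]; ring_nf

lemma tendsto_pow_mul_gauss_cocompact {c : ℝ} (hc : 0 < c) (k : ℕ) :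
    Filter.Tendsto (fun x : ℝ => x ^ k * Real.exp (-c * x ^ 2)) (Filter.cocompact ℝ) (𝓝 0) := by
  have h := tendsto_rpow_abs_mul_exp_neg_mul_sq_cocompact hc (k : ℝ)
  rw [tendsto_zero_iff_norm_tendsto_zero]
  refine h.congr fun x => ?_
  rw [Real.norm_eq_abs, abs_mul, abs_pow, abs_of_pos (Real.exp_pos _), Real.rpow_natCast]

lemma integral_odd_pow_mul_gauss {c : ℝ} (n : ℕ) :
    ∫ x : ℝ, x ^ (2 * n + 1) * Real.exp (-c * x ^ 2) = 0 := by
  have h := MeasureTheory.integral_neg_eq_self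
    (fun x : ℝ => x ^ (2 * n + 1) * Real.exp (-c * x ^ 2)) volume
  have h2 : (∫ x : ℝ, (-x) ^ (2 * n + 1) * Real.exp (-c * (-x) ^ 2))
      = - ∫ x : ℝ, x ^ (2 * n + 1) * Real.exp (-c * x ^ 2) := by
    rw [← integral_neg]
    congr 1; funext x
    rw [Odd.neg_pow ⟨n, by ring⟩, neg_sq, neg_mul]
  rw [h2] at h
  linarith

lemma integral_pow_mul_gauss_rec {c : ℝ} (hc : 0 < c) (n : ℕ) :
    ∫ x : ℝ, x ^ (n + 2) * Real.exp (-c * x ^ 2)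
      = ((n + 1) / (2 * c)) * ∫ x : ℝ, x ^ n * Real.exp (-c * x ^ 2) := by
  set f : ℝ → ℝ := fun x => x ^ (n + 1) * Real.exp (-c * x ^ 2) with hf
  set f' : ℝ → ℝ := fun x =>
    (n + 1) * x ^ n * Real.exp (-c * x ^ 2) - 2 * c * (x ^ (n + 2) * Real.exp (-c * x ^ 2)) with hf'
  have hderiv : ∀ x : ℝ, HasDerivAt f (f' x) x := by
    intro x
    have h1 : HasDerivAt (fun x : ℝ => x ^ (n + 1)) ((n + 1) * x ^ n) x := by
      simpa using hasDerivAt_pow (n + 1) x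
    have h2 : HasDerivAt (fun x : ℝ => Real.exp (-c * x ^ 2))
        (Real.exp (-c * x ^ 2) * (-c * (2 * x))) x := by
      have : HasDerivAt (fun x : ℝ => -c * x ^ 2) (-c * (2 * x)) x := by
        simpa using (hasDerivAt_pow 2 x).const_mul (-c)
      exact this.exp
    have : HasDerivAt (fun x : ℝ => x ^ (n + 1) * Real.exp (-c * x ^ 2)) _ x := h1.mul h2
    convert this using 1
    show (n + 1) * x ^ n * Real.exp (-c * x ^ 2) - 2 * c * (x ^ (n + 2) * Real.exp (-c * x ^ 2)) = _
    ring
  have hint : Integrable f' := by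
    have h1 := (integrable_pow_mul_gauss hc n).const_mul ((n : ℝ) + 1)
    have h2 := (integrable_pow_mul_gauss hc (n + 2)).const_mul (2 * c)
    have := h1.sub h2
    refine this.congr ?_
    filter_upwards with x
    simp only [hf', Pi.sub_apply]
    ring
  have htop : Filter.Tendsto f Filter.atTop (𝓝 0) :=
    (tendsto_pow_mul_gauss_cocompact hc (n + 1)).mono_left
      (by exact atTop_le_cocompact)
  have hbot : Filter.Tendsto f Filter.atBot (𝓝 0) :=
    (tendsto_pow_mul_gauss_cocompact hc (n + 1)).mono_left
      (by exact atBot_le_cocompact)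
  have hIoi : ∫ x in Set.Ioi (0:ℝ), f' x = 0 - f 0 :=
    integral_Ioi_of_hasDerivAt_of_tendsto' (fun x _ => hderiv x) hint.integrableOn htop
  have hIic : ∫ x in Set.Iic (0:ℝ), f' x = f 0 - 0 :=
    integral_Iic_of_hasDerivAt_of_tendsto' (fun x _ => hderiv x) hint.integrableOn hbot
  have htot : ∫ x : ℝ, f' x = 0 := by
    rw [← MeasureTheory.integral_add_compl (measurableSet_Iic (a := (0:ℝ))) hint, Set.compl_Iic,
      hIic, hIoi]
    ring
  have h1 : Integrable (fun x : ℝ => ((n : ℝ) + 1) * (x ^ n * Real.exp (-c * x ^ 2))) :=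
    (integrable_pow_mul_gauss hc n).const_mul _
  have h2 : Integrable (fun x : ℝ => (2 * c) * (x ^ (n + 2) * Real.exp (-c * x ^ 2))) :=
    (integrable_pow_mul_gauss hc (n + 2)).const_mul _
  have hsplit : ∫ x : ℝ, f' x
      = (n + 1) * (∫ x : ℝ, x ^ n * Real.exp (-c * x ^ 2))
        - 2 * c * ∫ x : ℝ, x ^ (n + 2) * Real.exp (-c * x ^ 2) := by
    calc ∫ x : ℝ, f' x
        = ∫ x : ℝ, (((n : ℝ) + 1) * (x ^ n * Real.exp (-c * x ^ 2))
            - (2 * c) * (x ^ (n + 2) * Real.exp (-c * x ^ 2))) := by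
          congr 1; funext x; simp only [hf']; ring
      _ = _ := by
          rw [MeasureTheory.integral_sub h1 h2, integral_const_mul,
            integral_const_mul]
  rw [htot] at hsplit
  have h2c : (2 * c) ≠ 0 := by positivity
  rw [div_mul_eq_mul_div, eq_div_iff h2c]
  linarith

lemma integral_quartic_gauss {s : ℝ} (hs : 0 < s) (p q r t v : ℝ) :
    ∫ u : ℝ, (p + q * u + r * u ^ 2 + t * u ^ 3 + v * u ^ 4) *
        ((Real.sqrt (2 * π * s))⁻¹ * Real.exp (-u ^ 2 / (2 * s)))
      = p + r * s + 3 * v * s ^ 2 := by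
  set c : ℝ := (2 * s)⁻¹ with hcdef
  have hc : 0 < c := by positivity
  have hexp : ∀ u : ℝ, Real.exp (-u ^ 2 / (2 * s)) = Real.exp (-c * u ^ 2) := by
    intro u; congr 1; rw [hcdef]; field_simp
  set E : ℝ → ℝ := fun u => Real.exp (-c * u ^ 2) with hE
  set K : ℝ := (Real.sqrt (2 * π * s))⁻¹ with hK
  have int_n : ∀ n : ℕ, Integrable (fun u : ℝ => u ^ n * E u) := fun n =>
    integrable_pow_mul_gauss hc n
  set I : ℕ → ℝ := fun n => ∫ u : ℝ, u ^ n * E u with hI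
  have hI0 : I 0 = Real.sqrt (π / c) := by
    simp only [hI, pow_zero, one_mul]
    exact integral_gaussian c
  have hI1 : I 1 = 0 := by
    simp only [hI, hE]; simpa using integral_odd_pow_mul_gauss (c := c) 0
  have hI3 : I 3 = 0 := by
    simp only [hI, hE]; simpa using integral_odd_pow_mul_gauss (c := c) 1
  have hI2 : I 2 = (2 * c)⁻¹ * I 0 := by
    simp only [hI, hE]
    have h := integral_pow_mul_gauss_rec hc 0
    push_cast at h
    rw [h]; ring_nf
  have hI4 : I 4 = (2 + 1 : ℝ) * (2 * c)⁻¹ * I 2 := by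
    simp only [hI, hE]
    have h := integral_pow_mul_gauss_rec hc 2
    push_cast at h
    rw [h]; ring_nf
  set coef : ℕ → ℝ := fun i => [p, q, r, t, v].getD i 0 with hcoef
  have hintc : ∀ i ∈ Finset.range 5, Integrable (fun u : ℝ => coef i * (u ^ i * E u)) :=
    fun i _ => (int_n i).const_mul _
  have step : (∫ u : ℝ, (p + q * u + r * u ^ 2 + t * u ^ 3 + v * u ^ 4) * (K * E u))
      = K * (p * I 0 + q * I 1 + r * I 2 + t * I 3 + v * I 4) := by
    calc (∫ u : ℝ, (p + q * u + r * u ^ 2 + t * u ^ 3 + v * u ^ 4) * (K * E u))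
        = ∫ u : ℝ, K * ∑ i ∈ Finset.range 5, coef i * (u ^ i * E u) := by
          congr 1; funext u
          simp only [Finset.sum_range_succ, Finset.sum_range_zero, hcoef,
            List.getD_cons_zero, List.getD_cons_succ]
          ring
      _ = K * ∫ u : ℝ, ∑ i ∈ Finset.range 5, coef i * (u ^ i * E u) := integral_const_mul _ _
      _ = K * ∑ i ∈ Finset.range 5, ∫ u : ℝ, coef i * (u ^ i * E u) := by
          rw [integral_finset_sum _ hintc]
      _ = K * (p * I 0 + q * I 1 + r * I 2 + t * I 3 + v * I 4) := by
          simp only [integral_const_mul]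
          simp only [Finset.sum_range_succ, Finset.sum_range_zero, hcoef,
            List.getD_cons_zero, List.getD_cons_succ, hI]
          ring
  have hsqrt : Real.sqrt (π / c) = Real.sqrt (2 * π * s) := by
    congr 1; rw [hcdef]; field_simp
  have hKpos : 0 < Real.sqrt (2 * π * s) := Real.sqrt_pos.mpr (by positivity)
  have hKval : K * Real.sqrt (π / c) = 1 := by
    rw [hsqrt, hK, inv_mul_cancel₀ (ne_of_gt hKpos)]
  have h2c : (2 * c)⁻¹ = s := by rw [hcdef]; field_simp
  calc (∫ u : ℝ, (p + q * u + r * u ^ 2 + t * u ^ 3 + v * u ^ 4) *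
        ((Real.sqrt (2 * π * s))⁻¹ * Real.exp (-u ^ 2 / (2 * s))))
      = ∫ u : ℝ, (p + q * u + r * u ^ 2 + t * u ^ 3 + v * u ^ 4) * (K * E u) := by
        congr 1; funext u; rw [hexp u]
    _ = K * (p * I 0 + q * I 1 + r * I 2 + t * I 3 + v * I 4) := step
    _ = (K * Real.sqrt (π / c)) * (p + r * (2 * c)⁻¹ + 3 * v * ((2 * c)⁻¹) ^ 2) := by
        rw [hI1, hI3, hI4, hI2, hI0]; ring
    _ = p + r * s + 3 * v * s ^ 2 := by rw [h2c, hKval, one_mul]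

lemma integrable_poly4_gauss {a : ℝ} (ha : 0 < a) (p q r t v : ℝ) :
    Integrable (fun x : ℝ =>
      (p + q * x + r * x ^ 2 + t * x ^ 3 + v * x ^ 4) * Real.exp (-a * x ^ 2)) := by
  have h := (((integrable_pow_mul_gauss ha 0).const_mul p).add
    (((integrable_pow_mul_gauss ha 1).const_mul q).add
    (((integrable_pow_mul_gauss ha 2).const_mul r).add
    (((integrable_pow_mul_gauss ha 3).const_mul t).add
    ((integrable_pow_mul_gauss ha 4).const_mul v)))))
  refine h.congr (Filter.Eventually.of_forall fun x => ?_)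
  simp only [Pi.add_apply]
  ring

lemma phi2_factor {ρ : ℝ} (h : ρ ^ 2 < 1) (z₁ z₂ : ℝ) :
    phi2 ρ z₁ z₂ = ((Real.sqrt (2 * π * 1))⁻¹ * Real.exp (-z₁ ^ 2 / (2 * 1))) *
      ((Real.sqrt (2 * π * (1 - ρ ^ 2)))⁻¹ *
        Real.exp (-(z₂ - ρ * z₁) ^ 2 / (2 * (1 - ρ ^ 2)))) := by
  have hs : 0 < 1 - ρ ^ 2 := by linarith
  have hsq : Real.sqrt (2 * π * 1) * Real.sqrt (2 * π * (1 - ρ ^ 2))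
      = 2 * π * Real.sqrt (1 - ρ ^ 2) := by
    rw [← Real.sqrt_mul (by positivity),
      show (2 * π * 1) * (2 * π * (1 - ρ ^ 2)) = (2 * π) ^ 2 * (1 - ρ ^ 2) by ring,
      Real.sqrt_mul (by positivity), Real.sqrt_sq (by positivity)]
  have hexp : Real.exp (-z₁ ^ 2 / (2 * 1)) * Real.exp (-(z₂ - ρ * z₁) ^ 2 / (2 * (1 - ρ ^ 2)))
      = Real.exp (-(z₁ ^ 2 - 2 * ρ * z₁ * z₂ + z₂ ^ 2) / (2 * (1 - ρ ^ 2))) := by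
    rw [← Real.exp_add]
    congr 1
    field_simp
    ring
  unfold phi2
  rw [show ((Real.sqrt (2 * π * 1))⁻¹ * Real.exp (-z₁ ^ 2 / (2 * 1))) *
      ((Real.sqrt (2 * π * (1 - ρ ^ 2)))⁻¹ *
        Real.exp (-(z₂ - ρ * z₁) ^ 2 / (2 * (1 - ρ ^ 2))))
    = (Real.sqrt (2 * π * 1) * Real.sqrt (2 * π * (1 - ρ ^ 2)))⁻¹ *
      (Real.exp (-z₁ ^ 2 / (2 * 1)) * Real.exp (-(z₂ - ρ * z₁) ^ 2 / (2 * (1 - ρ ^ 2)))) by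
        rw [mul_inv]; ring]
  rw [hsq, hexp]

lemma phi2_pos {ρ : ℝ} (h : ρ ^ 2 < 1) (z₁ z₂ : ℝ) : 0 < phi2 ρ z₁ z₂ := by
  have hs : 0 < 1 - ρ ^ 2 := by linarith
  unfold phi2
  have : 0 < Real.sqrt (1 - ρ ^ 2) := Real.sqrt_pos.mpr hs
  positivity

lemma key_integral (α₁ α₂ ρ : ℝ) (hρ2 : ρ ^ 2 < 1) :
    (∫ p : ℝ × ℝ, ((1 - α₁ * p.1 - α₂ * p.2) ^ 2 + 1) ^ 2 * phi2 ρ p.1 p.2) =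
      (2 + α₁ ^ 2 + 2 * ρ * α₁ * α₂ + α₂ ^ 2) *
        (2 + 3 * α₁ ^ 2 + 6 * ρ * α₁ * α₂ + 3 * α₂ ^ 2) := by
  have hs : 0 < 1 - ρ ^ 2 := by linarith
  have habs : |ρ| < 1 := by nlinarith [sq_abs ρ, abs_nonneg ρ]
  set c : ℝ := (1 - |ρ|) / (2 * (1 - ρ ^ 2)) with hcdef
  have h1abs : 0 < 1 - |ρ| := by linarith
  have hc : 0 < c := by
    rw [hcdef]; exact div_pos h1abs (by linarith)
  -- pointwise bound on phi2
  have hphile : ∀ z₁ z₂ : ℝ, phi2 ρ z₁ z₂ ≤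
      (2 * π * Real.sqrt (1 - ρ ^ 2))⁻¹ * (Real.exp (-c * z₁ ^ 2) * Real.exp (-c * z₂ ^ 2)) := by
    intro z₁ z₂
    unfold phi2
    rw [← Real.exp_add]
    have hXY : -(z₁ ^ 2 - 2 * ρ * z₁ * z₂ + z₂ ^ 2) / (2 * (1 - ρ ^ 2))
        ≤ -c * z₁ ^ 2 + -c * z₂ ^ 2 := by
      have hA : (1 - |ρ|) * (z₁ ^ 2 + z₂ ^ 2) ≤ z₁ ^ 2 - 2 * ρ * z₁ * z₂ + z₂ ^ 2 := by
        have h1 : 2 * ρ * z₁ * z₂ ≤ 2 * |ρ| * (|z₁| * |z₂|) := by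
          calc 2 * ρ * z₁ * z₂ ≤ |2 * ρ * z₁ * z₂| := le_abs_self _
            _ = 2 * |ρ| * (|z₁| * |z₂|) := by
                rw [abs_mul, abs_mul, abs_mul, abs_two]; ring
        have h2 : 2 * (|z₁| * |z₂|) ≤ z₁ ^ 2 + z₂ ^ 2 := by
          nlinarith [sq_nonneg (|z₁| - |z₂|), sq_abs z₁, sq_abs z₂]
        have h3 : |ρ| * (2 * (|z₁| * |z₂|)) ≤ |ρ| * (z₁ ^ 2 + z₂ ^ 2) :=
          mul_le_mul_of_nonneg_left h2 (abs_nonneg ρ)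
        nlinarith [h1, h3]
      have heq : -c * z₁ ^ 2 + -c * z₂ ^ 2
          = -((1 - |ρ|) * (z₁ ^ 2 + z₂ ^ 2)) / (2 * (1 - ρ ^ 2)) := by
        rw [hcdef]; field_simp; ring
      rw [heq, div_le_div_iff_of_pos_right (by positivity)]
      linarith
    have hC : (0:ℝ) ≤ (2 * π * Real.sqrt (1 - ρ ^ 2))⁻¹ := by positivity
    exact mul_le_mul_of_nonneg_left (Real.exp_le_exp.mpr hXY) hC
  -- polynomial bound
  have hP : ∀ z₁ z₂ : ℝ, ((1 - α₁ * z₁ - α₂ * z₂) ^ 2 + 1) ^ 2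
      ≤ 9 * ((1 + 2 * α₁ ^ 2 * z₁ ^ 2) ^ 2 * (1 + 2 * α₂ ^ 2 * z₂ ^ 2) ^ 2) := by
    intro z₁ z₂
    have step1 : (1 - α₁ * z₁ - α₂ * z₂) ^ 2 + 1
        ≤ 3 * ((1 + 2 * α₁ ^ 2 * z₁ ^ 2) * (1 + 2 * α₂ ^ 2 * z₂ ^ 2)) := by
      nlinarith [sq_nonneg (1 + α₁ * z₁ + α₂ * z₂), sq_nonneg (α₁ * z₁ - α₂ * z₂),
        sq_nonneg (α₁ * z₁ * (α₂ * z₂)), sq_nonneg (α₁ * z₁ + α₂ * z₂)]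
    have h0 : (0:ℝ) ≤ (1 - α₁ * z₁ - α₂ * z₂) ^ 2 + 1 := by positivity
    have := pow_le_pow_left₀ h0 step1 2
    nlinarith [this]
  -- integrability of the bound
  have hq : ∀ b : ℝ, Integrable (fun x : ℝ => (1 + b * x ^ 2) ^ 2 * Real.exp (-c * x ^ 2)) := by
    intro b
    exact (integrable_poly4_gauss hc 1 0 (2 * b) 0 (b ^ 2)).congr
      (Filter.Eventually.of_forall fun x => by ring)
  have hbint : Integrable (fun z : ℝ × ℝ =>
      (9 * (2 * π * Real.sqrt (1 - ρ ^ 2))⁻¹ *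
        ((1 + 2 * α₁ ^ 2 * z.1 ^ 2) ^ 2 * Real.exp (-c * z.1 ^ 2))) *
      ((1 + 2 * α₂ ^ 2 * z.2 ^ 2) ^ 2 * Real.exp (-c * z.2 ^ 2)))
      ((volume : Measure ℝ).prod volume) :=
    ((hq (2 * α₁ ^ 2)).const_mul _).mul_prod (hq (2 * α₂ ^ 2))
  have hFcont : Continuous (fun z : ℝ × ℝ =>
      ((1 - α₁ * z.1 - α₂ * z.2) ^ 2 + 1) ^ 2 * phi2 ρ z.1 z.2) := by
    unfold phi2; fun_prop
  have hFpos : ∀ z : ℝ × ℝ,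
      0 ≤ ((1 - α₁ * z.1 - α₂ * z.2) ^ 2 + 1) ^ 2 * phi2 ρ z.1 z.2 := fun z =>
    mul_nonneg (by positivity) (phi2_pos hρ2 z.1 z.2).le
  have hFint : Integrable (fun z : ℝ × ℝ =>
      ((1 - α₁ * z.1 - α₂ * z.2) ^ 2 + 1) ^ 2 * phi2 ρ z.1 z.2)
      ((volume : Measure ℝ).prod volume) := by
    refine hbint.mono' ?_ ?_
    · exact (hFcont.aestronglyMeasurable : AEStronglyMeasurable _ ((volume : Measure ℝ).prod volume))
    · filter_upwards with z
      rw [Real.norm_eq_abs, abs_of_nonneg (hFpos z)]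
      calc ((1 - α₁ * z.1 - α₂ * z.2) ^ 2 + 1) ^ 2 * phi2 ρ z.1 z.2
          ≤ (9 * ((1 + 2 * α₁ ^ 2 * z.1 ^ 2) ^ 2 * (1 + 2 * α₂ ^ 2 * z.2 ^ 2) ^ 2)) *
            ((2 * π * Real.sqrt (1 - ρ ^ 2))⁻¹ *
              (Real.exp (-c * z.1 ^ 2) * Real.exp (-c * z.2 ^ 2))) := by
            apply mul_le_mul (hP z.1 z.2) (hphile z.1 z.2) (phi2_pos hρ2 z.1 z.2).le
            positivity
        _ = (9 * (2 * π * Real.sqrt (1 - ρ ^ 2))⁻¹ *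
              ((1 + 2 * α₁ ^ 2 * z.1 ^ 2) ^ 2 * Real.exp (-c * z.1 ^ 2))) *
            ((1 + 2 * α₂ ^ 2 * z.2 ^ 2) ^ 2 * Real.exp (-c * z.2 ^ 2)) := by ring
  -- inner integral
  have hinner : ∀ z₁ : ℝ,
      (∫ z₂ : ℝ, ((1 - α₁ * z₁ - α₂ * z₂) ^ 2 + 1) ^ 2 * phi2 ρ z₁ z₂)
      = ((Real.sqrt (2 * π * 1))⁻¹ * Real.exp (-z₁ ^ 2 / (2 * 1))) *
        ((((1 - (α₁ + ρ * α₂) * z₁) ^ 2 + 1) ^ 2)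
          + α₂ ^ 2 * (6 * ((α₁ + ρ * α₂) * z₁) ^ 2 - 12 * ((α₁ + ρ * α₂) * z₁) + 8) * (1 - ρ ^ 2)
          + 3 * α₂ ^ 4 * (1 - ρ ^ 2) ^ 2) := by
    intro z₁
    simp only [fun z₂ => phi2_factor hρ2 z₁ z₂]
    calc (∫ z₂ : ℝ, ((1 - α₁ * z₁ - α₂ * z₂) ^ 2 + 1) ^ 2 *
            (((Real.sqrt (2 * π * 1))⁻¹ * Real.exp (-z₁ ^ 2 / (2 * 1))) *
              ((Real.sqrt (2 * π * (1 - ρ ^ 2)))⁻¹ *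
                Real.exp (-(z₂ - ρ * z₁) ^ 2 / (2 * (1 - ρ ^ 2))))))
        = ∫ z₂ : ℝ, ((Real.sqrt (2 * π * 1))⁻¹ * Real.exp (-z₁ ^ 2 / (2 * 1))) *
            (((1 - α₁ * z₁ - α₂ * z₂) ^ 2 + 1) ^ 2 *
              ((Real.sqrt (2 * π * (1 - ρ ^ 2)))⁻¹ *
                Real.exp (-(z₂ - ρ * z₁) ^ 2 / (2 * (1 - ρ ^ 2))))) := by
          congr 1; funext z₂; ring
      _ = ((Real.sqrt (2 * π * 1))⁻¹ * Real.exp (-z₁ ^ 2 / (2 * 1))) *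
          ∫ z₂ : ℝ, ((1 - α₁ * z₁ - α₂ * z₂) ^ 2 + 1) ^ 2 *
              ((Real.sqrt (2 * π * (1 - ρ ^ 2)))⁻¹ *
                Real.exp (-(z₂ - ρ * z₁) ^ 2 / (2 * (1 - ρ ^ 2)))) := integral_const_mul _ _
      _ = _ := by
          congr 1
          have hshift : (∫ z₂ : ℝ, ((1 - α₁ * z₁ - α₂ * z₂) ^ 2 + 1) ^ 2 *
              ((Real.sqrt (2 * π * (1 - ρ ^ 2)))⁻¹ *
                Real.exp (-(z₂ - ρ * z₁) ^ 2 / (2 * (1 - ρ ^ 2)))))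
              = ∫ u : ℝ, ((1 - α₁ * z₁ - α₂ * (u + ρ * z₁)) ^ 2 + 1) ^ 2 *
              ((Real.sqrt (2 * π * (1 - ρ ^ 2)))⁻¹ *
                Real.exp (-(u + ρ * z₁ - ρ * z₁) ^ 2 / (2 * (1 - ρ ^ 2)))) :=
            (integral_add_right_eq_self (fun y : ℝ =>
              ((1 - α₁ * z₁ - α₂ * y) ^ 2 + 1) ^ 2 *
              ((Real.sqrt (2 * π * (1 - ρ ^ 2)))⁻¹ *
                Real.exp (-(y - ρ * z₁) ^ 2 / (2 * (1 - ρ ^ 2))))) (ρ * z₁)).symm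
          rw [hshift]
          have hre : (∫ u : ℝ, ((1 - α₁ * z₁ - α₂ * (u + ρ * z₁)) ^ 2 + 1) ^ 2 *
              ((Real.sqrt (2 * π * (1 - ρ ^ 2)))⁻¹ *
                Real.exp (-(u + ρ * z₁ - ρ * z₁) ^ 2 / (2 * (1 - ρ ^ 2)))))
              = ∫ u : ℝ, ((((1 - (α₁ + ρ * α₂) * z₁) ^ 2 + 1) ^ 2)
                + (α₂ * (4 * ((α₁ + ρ * α₂) * z₁) ^ 3 - 12 * ((α₁ + ρ * α₂) * z₁) ^ 2
                    + 16 * ((α₁ + ρ * α₂) * z₁) - 8)) * u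
                + (α₂ ^ 2 * (6 * ((α₁ + ρ * α₂) * z₁) ^ 2 - 12 * ((α₁ + ρ * α₂) * z₁) + 8)) * u ^ 2
                + (α₂ ^ 3 * (4 * ((α₁ + ρ * α₂) * z₁) - 4)) * u ^ 3
                + α₂ ^ 4 * u ^ 4) *
              ((Real.sqrt (2 * π * (1 - ρ ^ 2)))⁻¹ *
                Real.exp (-u ^ 2 / (2 * (1 - ρ ^ 2)))) := by
            congr 1; funext u
            rw [show u + ρ * z₁ - ρ * z₁ = u by ring]
            ring
          rw [hre, integral_quartic_gauss hs]
  -- outer integral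
  calc (∫ p : ℝ × ℝ, ((1 - α₁ * p.1 - α₂ * p.2) ^ 2 + 1) ^ 2 * phi2 ρ p.1 p.2)
      = ∫ z₁ : ℝ, ∫ z₂ : ℝ, ((1 - α₁ * z₁ - α₂ * z₂) ^ 2 + 1) ^ 2 * phi2 ρ z₁ z₂ := by
        exact integral_prod _ hFint
    _ = ∫ z₁ : ℝ, ((4 + 8 * α₂ ^ 2 * (1 - ρ ^ 2) + 3 * α₂ ^ 4 * (1 - ρ ^ 2) ^ 2)
          + (-8 * (α₁ + ρ * α₂) - 12 * α₂ ^ 2 * (1 - ρ ^ 2) * (α₁ + ρ * α₂)) * z₁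
          + (8 * (α₁ + ρ * α₂) ^ 2 + 6 * α₂ ^ 2 * (1 - ρ ^ 2) * (α₁ + ρ * α₂) ^ 2) * z₁ ^ 2
          + (-4 * (α₁ + ρ * α₂) ^ 3) * z₁ ^ 3
          + (α₁ + ρ * α₂) ^ 4 * z₁ ^ 4) *
        ((Real.sqrt (2 * π * 1))⁻¹ * Real.exp (-z₁ ^ 2 / (2 * 1))) := by
        congr 1; funext z₁
        rw [hinner z₁]
        ring
    _ = (4 + 8 * α₂ ^ 2 * (1 - ρ ^ 2) + 3 * α₂ ^ 4 * (1 - ρ ^ 2) ^ 2)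
          + (8 * (α₁ + ρ * α₂) ^ 2 + 6 * α₂ ^ 2 * (1 - ρ ^ 2) * (α₁ + ρ * α₂) ^ 2) * 1
          + 3 * ((α₁ + ρ * α₂) ^ 4) * 1 ^ 2 := integral_quartic_gauss one_pos _ _ _ _ _
    _ = (2 + α₁ ^ 2 + 2 * ρ * α₁ * α₂ + α₂ ^ 2) *
        (2 + 3 * α₁ ^ 2 + 6 * ρ * α₁ * α₂ + 3 * α₂ ^ 2) := by ring

theorem bbasn2_normalizing_constant (α₁ α₂ ρ : ℝ) (hρ : ρ ∈ Set.Ioo (-1 : ℝ) 1) :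
    (∫ p : ℝ × ℝ, ((1 - α₁ * p.1 - α₂ * p.2) ^ 2 + 1) ^ 2 * phi2 ρ p.1 p.2) =
      (2 + α₁ ^ 2 + 2 * ρ * α₁ * α₂ + α₂ ^ 2) *
        (2 + 3 * α₁ ^ 2 + 6 * ρ * α₁ * α₂ + 3 * α₂ ^ 2) ∧
    (∀ p : ℝ × ℝ,
      0 ≤ ((1 - α₁ * p.1 - α₂ * p.2) ^ 2 + 1) ^ 2 * phi2 ρ p.1 p.2 /
        ((2 + α₁ ^ 2 + 2 * ρ * α₁ * α₂ + α₂ ^ 2) *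
          (2 + 3 * α₁ ^ 2 + 6 * ρ * α₁ * α₂ + 3 * α₂ ^ 2))) ∧
    (∫ p : ℝ × ℝ, ((1 - α₁ * p.1 - α₂ * p.2) ^ 2 + 1) ^ 2 * phi2 ρ p.1 p.2 /
        ((2 + α₁ ^ 2 + 2 * ρ * α₁ * α₂ + α₂ ^ 2) *
          (2 + 3 * α₁ ^ 2 + 6 * ρ * α₁ * α₂ + 3 * α₂ ^ 2))) = 1 := by
  obtain ⟨h1, h2⟩ := hρ
  have hρ2 : ρ ^ 2 < 1 := by nlinarith
  have hkey := key_integral α₁ α₂ ρ hρ2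
  have hσ : 0 ≤ α₁ ^ 2 + 2 * ρ * α₁ * α₂ + α₂ ^ 2 := by
    nlinarith [sq_nonneg (ρ * α₁ + α₂),
      mul_nonneg (sq_nonneg α₁) (by linarith : (0:ℝ) ≤ 1 - ρ ^ 2)]
  have hD1 : 0 < 2 + α₁ ^ 2 + 2 * ρ * α₁ * α₂ + α₂ ^ 2 := by linarith
  have hD2 : 0 < 2 + 3 * α₁ ^ 2 + 6 * ρ * α₁ * α₂ + 3 * α₂ ^ 2 := by nlinarith
  have hD : 0 < (2 + α₁ ^ 2 + 2 * ρ * α₁ * α₂ + α₂ ^ 2) *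
      (2 + 3 * α₁ ^ 2 + 6 * ρ * α₁ * α₂ + 3 * α₂ ^ 2) := mul_pos hD1 hD2
  refine ⟨hkey, fun p => ?_, ?_⟩
  · exact div_nonneg (mul_nonneg (by positivity) (phi2_pos hρ2 _ _).le) hD.le
  · rw [integral_div, hkey, div_self hD.ne']
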